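/- (Theorem 1, fixed-point case, derivatives with respect to h.) Let (z_t)_{t\ge 1} be an orbit of F, i.e. z_{t+1} = F(z_t), and assume z_t converges to a fixed point z^* of F with z^*_i \ne 0 for all i, and that \|W_\Omega(z^*)\|_2 < 1. Fix m \in \{1,\dots,M\}, let e_m denote the m-th standard basis vector, and define the derivative sequence (H_t)_{t\ge 1} (which equals \partial z_t / \partial h_m) by H_1 = 0 and H_{t+1} = e_m + W_\Omega(z_t)\, H_t. Then \sup_t \|H_t\| < \infty, and moreover \limsup_{T\to\infty}\|H_T\| \le 1/(1 - \|W_\Omega(z^*)\|_2). -/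

import Mathlib

open Matrix Filter Topology

/-- The operator 2-norm (largest singular value) of a real matrix. -/
noncomputable def opNorm2 {m n : Type*} [Fintype m] [Fintype n] [DecidableEq n]
    (A : Matrix m n ℝ) : ℝ :=
  ‖LinearMap.toContinuousLinearMap (Matrix.toEuclideanLin (𝕜 := ℝ) A)‖

/-- Euclidean norm of a real vector. -/
noncomputable def vnorm {n : Type*} [Fintype n] (v : n → ℝ) : ℝ :=
  Real.sqrt (∑ i, v i ^ 2)

/-- Componentwise ReLU. -/
noncomputable def relu {n : Type*} (z : n → ℝ) : n → ℝ := fun i => max 0 (z i)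

/-- `Dmat z` is the diagonal 0–1 matrix with `(Dmat z) i i = 1` iff `z i > 0`. -/
noncomputable def Dmat {n : Type*} [Fintype n] [DecidableEq n] (z : n → ℝ) :
    Matrix n n ℝ :=
  Matrix.diagonal (fun i => if 0 < z i then (1 : ℝ) else 0)

/-- `W_Ω(z) = A + W D(z)`. -/
noncomputable def Wom {n : Type*} [Fintype n] [DecidableEq n]
    (A W : Matrix n n ℝ) (z : n → ℝ) : Matrix n n ℝ :=
  A + W * Dmat z

/-- The deterministic, input-free PLRNN map `F(z) = A z + W φ(z) + h`. -/
noncomputable def plrnn {n : Type*} [Fintype n] [DecidableEq n]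
    (A W : Matrix n n ℝ) (h : n → ℝ) (z : n → ℝ) : n → ℝ :=
  A.mulVec z + W.mulVec (relu z) + h

/- Near `z*` no coordinate changes sign, so `W_Ω(z_t)` is eventually the constant matrix
`W_Ω(z*)`. From then on `‖H_{t+1}‖ ≤ 1 + ρ ‖H_t‖` with `ρ = ‖W_Ω(z*)‖₂ < 1`, and such a
sequence is dominated by the solution of `x_{k+1} = 1 + ρ x_k`, which converges to
`1 / (1 - ρ)`. -/

section AffineRecursion

variable {u : ℕ → ℝ} {c ρ : ℝ}

theorem le_pow_mul_add_div_of_le_add_mul (hρ0 : 0 ≤ ρ) (hρ1 : ρ ≠ 1) {N : ℕ}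
    (hu : ∀ k ≥ N, u (k + 1) ≤ c + ρ * u k) :
    ∀ k ≥ N, u k ≤ ρ ^ (k - N) * (u N - c / (1 - ρ)) + c / (1 - ρ) := by
  have h1ρ : 1 - ρ ≠ 0 := sub_ne_zero.2 hρ1.symm
  intro k hk
  induction k, hk using Nat.le_induction with
  | base => simp
  | succ k hk ih =>
    calc u (k + 1) ≤ c + ρ * u k := hu k hk
      _ ≤ c + ρ * (ρ ^ (k - N) * (u N - c / (1 - ρ)) + c / (1 - ρ)) := by gcongr
      _ = ρ ^ (k + 1 - N) * (u N - c / (1 - ρ)) + c / (1 - ρ) := by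
        rw [Nat.sub_add_comm hk, pow_succ]
        field_simp
        ring

theorem exists_tendsto_majorant_of_eventually_le_add_mul (hρ0 : 0 ≤ ρ) (hρ1 : ρ < 1)
    (hu : ∀ᶠ k in atTop, u (k + 1) ≤ c + ρ * u k) :
    ∃ v : ℕ → ℝ, Tendsto v atTop (𝓝 (c / (1 - ρ))) ∧ u ≤ᶠ[atTop] v := by
  obtain ⟨N, hN⟩ := eventually_atTop.1 hu
  refine ⟨fun k => ρ ^ (k - N) * (u N - c / (1 - ρ)) + c / (1 - ρ), ?_, ?_⟩
  · have hpow : Tendsto (fun k => ρ ^ (k - N)) atTop (𝓝 0) :=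
      (tendsto_pow_atTop_nhds_zero_of_lt_one hρ0 hρ1).comp (tendsto_sub_atTop_nat N)
    simpa using (hpow.mul_const (u N - c / (1 - ρ))).add_const (c / (1 - ρ))
  · filter_upwards [eventually_ge_atTop N] with k hk
    exact le_pow_mul_add_div_of_le_add_mul hρ0 hρ1.ne hN k hk

end AffineRecursion

section EuclideanNorm

variable {n : Type*} [Fintype n]

theorem vnorm_eq_norm_toLp (v : n → ℝ) : vnorm v = ‖WithLp.toLp 2 v‖ := by
  simp [vnorm, EuclideanSpace.norm_eq, sq_abs]

theorem vnorm_nonneg (v : n → ℝ) : 0 ≤ vnorm v :=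
  Real.sqrt_nonneg _

theorem vnorm_add_le (u v : n → ℝ) : vnorm (u + v) ≤ vnorm u + vnorm v := by
  simpa only [vnorm_eq_norm_toLp, WithLp.toLp_add] using norm_add_le _ _

variable [DecidableEq n]

theorem vnorm_single_one (i : n) : vnorm (Pi.single i (1 : ℝ)) = 1 := by
  simp [vnorm, Pi.single_apply]

variable {m : Type*} [Fintype m]

theorem opNorm2_nonneg (B : Matrix m n ℝ) : 0 ≤ opNorm2 B :=
  norm_nonneg _

theorem vnorm_mulVec_le (B : Matrix m n ℝ) (v : n → ℝ) :
    vnorm (B *ᵥ v) ≤ opNorm2 B * vnorm v := by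
  rw [vnorm_eq_norm_toLp, vnorm_eq_norm_toLp]
  exact (LinearMap.toContinuousLinearMap (Matrix.toEuclideanLin (𝕜 := ℝ) B)).le_opNorm
    (WithLp.toLp 2 v)

end EuclideanNorm

theorem Dmat_eventually_eq {ι n : Type*} [Fintype n] [DecidableEq n] {l : Filter ι}
    {z : ι → n → ℝ} {zstar : n → ℝ} (hconv : Tendsto z l (𝓝 zstar))
    (hnz : ∀ i, zstar i ≠ 0) : ∀ᶠ t in l, Dmat (z t) = Dmat zstar := by
  have hsign : ∀ᶠ t in l, ∀ i, (0 < z t i ↔ 0 < zstar i) := by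
    refine eventually_all.2 fun i => ?_
    have hzi := tendsto_pi_nhds.1 hconv i
    rcases (hnz i).lt_or_gt with hneg | hpos
    · filter_upwards [hzi.eventually_lt_const hneg] with t ht
      exact ⟨fun h => absurd h ht.le.not_gt, fun h => absurd h hneg.le.not_gt⟩
    · filter_upwards [hzi.eventually_const_lt hpos] with t ht
      exact iff_of_true ht hpos
  filter_upwards [hsign] with t ht
  simp only [Dmat, ht]

theorem gradients_wrt_h_bounded_general {M : ℕ} (A W : Matrix (Fin M) (Fin M) ℝ)
    (z : ℕ → Fin M → ℝ)
    (zstar : Fin M → ℝ)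
    (hconv : Tendsto z atTop (𝓝 zstar)) (hnz : ∀ i, zstar i ≠ 0)
    (hnorm : opNorm2 (Wom A W zstar) < 1)
    (m : Fin M) (H : ℕ → Fin M → ℝ)
    (hHrec : ∀ t, 1 ≤ t →
      H (t + 1) = (Pi.single m 1 : Fin M → ℝ) + (Wom A W (z t)).mulVec (H t)) :
    (∃ C : ℝ, ∀ t, vnorm (H t) ≤ C) ∧
      Filter.limsup (fun T => vnorm (H T)) atTop ≤ 1 / (1 - opNorm2 (Wom A W zstar)) := by
  have hstep : ∀ᶠ t in atTop,
      vnorm (H (t + 1)) ≤ 1 + opNorm2 (Wom A W zstar) * vnorm (H t) := by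
    filter_upwards [eventually_ge_atTop 1, Dmat_eventually_eq hconv hnz] with t ht hD
    have hW : Wom A W (z t) = Wom A W zstar := by rw [Wom, Wom, hD]
    rw [hHrec t ht, hW]
    calc _ ≤ vnorm (Pi.single m 1) + vnorm ((Wom A W zstar) *ᵥ H t) := vnorm_add_le _ _
      _ ≤ 1 + opNorm2 (Wom A W zstar) * vnorm (H t) := by
        rw [vnorm_single_one]
        exact add_le_add_right (vnorm_mulVec_le _ _) 1
  obtain ⟨v, hv, hle⟩ :=
    exists_tendsto_majorant_of_eventually_le_add_mul (u := fun t => vnorm (H t))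
      (opNorm2_nonneg _) hnorm hstep
  constructor
  · obtain ⟨C, hC⟩ := (hv.isBoundedUnder_le.mono_le hle).bddAbove_range
    exact ⟨C, fun t => hC ⟨t, rfl⟩⟩
  · calc limsup (fun T => vnorm (H T)) atTop ≤ limsup v atTop :=
          limsup_le_limsup hle (isCoboundedUnder_le_of_le atTop fun t => vnorm_nonneg (H t))
            hv.isBoundedUnder_le
      _ = 1 / (1 - opNorm2 (Wom A W zstar)) := hv.limsup_eq

/-- Theorem 1, fixed-point case, derivatives w.r.t. `h`: along an orbit
converging to a stable fixed point `z*` with no zero component and `‖W_Ω(z*)‖₂ < 1`, the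
derivative sequence `H` of the states w.r.t. the bias `h m` (satisfying `H 1 = 0` and
`H (t+1) = e_m + W_Ω(z t) H t`) is bounded, with
`limsup ‖H T‖ ≤ 1 / (1 - ‖W_Ω(z*)‖₂)`. -/
theorem gradients_wrt_h_bounded {M : ℕ} (A W : Matrix (Fin M) (Fin M) ℝ)
    (hA : A.IsDiag) (hWd : ∀ i, W i i = 0) (h : Fin M → ℝ)
    (z : ℕ → Fin M → ℝ) (horb : ∀ t, 1 ≤ t → z (t + 1) = plrnn A W h (z t))
    (zstar : Fin M → ℝ) (hfix : plrnn A W h zstar = zstar)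
    (hconv : Tendsto z atTop (𝓝 zstar)) (hnz : ∀ i, zstar i ≠ 0)
    (hnorm : opNorm2 (Wom A W zstar) < 1)
    (m : Fin M) (H : ℕ → Fin M → ℝ) (hH1 : H 1 = 0)
    (hHrec : ∀ t, 1 ≤ t →
      H (t + 1) = (Pi.single m 1 : Fin M → ℝ) + (Wom A W (z t)).mulVec (H t)) :
    (∃ C : ℝ, ∀ t, vnorm (H t) ≤ C) ∧
      Filter.limsup (fun T => vnorm (H T)) atTop ≤ 1 / (1 - opNorm2 (Wom A W zstar)) :=
  gradients_wrt_h_bounded_general A W z zstar hconv hnz hnorm m H hHrec
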